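/- arXiv:0707.0678 — 5 statements merged into one kernel-verified Lean document; each statement's English description precedes it below -/
import Mathlib

section
/- Let n ≤ m be positive integers. The number of quadruples (i,j,h,k) of integers satisfying 1 ≤ i ≤ j ≤ h ≤ k ≤ m+n, j ≤ n, i+k ≤ n+m, and j+h ≤ n+m equals binomial(n+1,2)·binomial(m+1,2). -/
open Finset in
private lemma card_quadruples_sum_linear (c : ℤ) (a b : ℕ) :
    (∑ h ∈ Icc a b, (c - (h : ℤ))) * 2 = ((b + 1 - a : ℕ) : ℤ) * (2 * c - a - b) := by
  induction b with
  | zero =>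
    rcases Nat.eq_zero_or_pos a with rfl | ha
    · simp; ring
    · rw [Icc_eq_empty (by omega), Nat.sub_eq_zero_of_le (by omega)]; simp
  | succ b ih =>
    rcases le_or_gt a (b + 1) with hab | hab
    · rw [Finset.sum_Icc_succ_top hab, add_mul, ih]
      have h1 : ((b + 1 + 1 - a : ℕ) : ℤ) = ((b + 1 - a : ℕ) : ℤ) + 1 := by omega
      have h2 : ((b + 1 - a : ℕ) : ℤ) = (b : ℤ) + 1 - a := by omega
      rw [h1, h2]; push_cast; ring
    · rw [Icc_eq_empty (by omega), Nat.sub_eq_zero_of_le (by omega)]; simp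

open Finset in
private lemma card_quadruples_sum_linear2 (c : ℤ) (a b : ℕ) :
    ∑ j ∈ Icc a b, (c - 2 * (j : ℤ)) = ((b + 1 - a : ℕ) : ℤ) * (c - a - b) := by
  induction b with
  | zero =>
    rcases Nat.eq_zero_or_pos a with rfl | ha
    · simp
    · rw [Icc_eq_empty (by omega), Nat.sub_eq_zero_of_le (by omega)]; simp
  | succ b ih =>
    rcases le_or_gt a (b + 1) with hab | hab
    · rw [Finset.sum_Icc_succ_top hab, ih]
      have h1 : ((b + 1 + 1 - a : ℕ) : ℤ) = ((b + 1 - a : ℕ) : ℤ) + 1 := by omega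
      have h2 : ((b + 1 - a : ℕ) : ℤ) = (b : ℤ) + 1 - a := by omega
      rw [h1, h2]; push_cast; ring
    · rw [Icc_eq_empty (by omega), Nat.sub_eq_zero_of_le (by omega)]; simp

open Finset in
private lemma card_quadruples_sum_cubic (c d : ℤ) (n : ℕ) :
    6 * ∑ i ∈ Icc 1 n, (c + d + 2 - 2 * (i : ℤ)) * (c + 1 - i) * (d + 1 - i)
      = 6 * ((c + d + 2) * (c + 1) * (d + 1)) * n
        - 3 * ((c + d + 2) * (c + d + 2) + 2 * (c + 1) * (d + 1)) * (n * (n + 1))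
        + ((c + d + 2) + 2 * (c + d + 2)) * ((n : ℤ) * (n + 1) * (2 * n + 1))
        - 3 * ((n : ℤ) * n * (n + 1) * (n + 1)) := by
  induction n with
  | zero => simp
  | succ n ih =>
    rw [Finset.sum_Icc_succ_top (by omega), mul_add, ih]
    push_cast; ring

/-- For positive integers `n ≤ m`, the number of quadruples `(i,j,h,k)` with
`1 ≤ i ≤ j ≤ h ≤ k ≤ m+n`, `j ≤ n`, `i+k ≤ n+m` and `j+h ≤ n+m`
equals `C(n+1,2)·C(m+1,2)`. -/
theorem card_quadruples (n m : ℕ) (hn : 0 < n) (hnm : n ≤ m) :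
    ((Finset.Icc 1 (n + m) ×ˢ Finset.Icc 1 (n + m) ×ˢ Finset.Icc 1 (n + m) ×ˢ
        Finset.Icc 1 (n + m)).filter
      (fun q : ℕ × ℕ × ℕ × ℕ =>
        q.1 ≤ q.2.1 ∧ q.2.1 ≤ q.2.2.1 ∧ q.2.2.1 ≤ q.2.2.2 ∧
        q.2.1 ≤ n ∧ q.1 + q.2.2.2 ≤ n + m ∧ q.2.1 + q.2.2.1 ≤ n + m)).card =
      (n + 1).choose 2 * (m + 1).choose 2 := by
  open Finset in
  set N := n + m with hN
  -- Step 1: reduce the cardinality to a triple sum.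
  have step1 : ((Finset.Icc 1 N ×ˢ Finset.Icc 1 N ×ˢ Finset.Icc 1 N ×ˢ
        Finset.Icc 1 N).filter
      (fun q : ℕ × ℕ × ℕ × ℕ =>
        q.1 ≤ q.2.1 ∧ q.2.1 ≤ q.2.2.1 ∧ q.2.2.1 ≤ q.2.2.2 ∧
        q.2.1 ≤ n ∧ q.1 + q.2.2.2 ≤ N ∧ q.2.1 + q.2.2.1 ≤ N)).card =
      ∑ i ∈ Icc 1 n, ∑ j ∈ Icc i n, ∑ h ∈ Icc j (N - j), (N + 1 - i - h) := by
    rw [Finset.card_filter]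
    simp only [Finset.sum_product]
    have hk : ∀ i ∈ Icc 1 N, ∀ j ∈ Icc 1 N, ∀ h ∈ Icc 1 N,
        (∑ k ∈ Icc 1 N, if i ≤ j ∧ j ≤ h ∧ h ≤ k ∧ j ≤ n ∧ i + k ≤ N ∧ j + h ≤ N then 1 else 0)
          = if i ≤ j ∧ j ≤ h ∧ j ≤ n ∧ j + h ≤ N then N + 1 - i - h else 0 := by
      intro i hi j hj h hh
      simp only [mem_Icc] at hi hj hh
      rw [← Finset.card_filter]
      by_cases hP : i ≤ j ∧ j ≤ h ∧ j ≤ n ∧ j + h ≤ N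
      · rw [if_pos hP]
        have : (Icc 1 N).filter
            (fun k => i ≤ j ∧ j ≤ h ∧ h ≤ k ∧ j ≤ n ∧ i + k ≤ N ∧ j + h ≤ N) = Icc h (N - i) := by
          ext k; simp only [mem_filter, mem_Icc]; omega
        rw [this, Nat.card_Icc]; omega
      · rw [if_neg hP]
        rw [Finset.card_eq_zero, Finset.filter_eq_empty_iff]
        intro k _; omega
    have hh : ∀ i ∈ Icc 1 N, ∀ j ∈ Icc 1 N,
        (∑ h ∈ Icc 1 N, if i ≤ j ∧ j ≤ h ∧ j ≤ n ∧ j + h ≤ N then N + 1 - i - h else 0)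
          = if i ≤ j ∧ j ≤ n then ∑ h ∈ Icc j (N - j), (N + 1 - i - h) else 0 := by
      intro i hi j hj
      simp only [mem_Icc] at hi hj
      by_cases hP : i ≤ j ∧ j ≤ n
      · rw [if_pos hP, ← Finset.sum_filter]
        congr 1
        ext h; simp only [mem_filter, mem_Icc]; omega
      · rw [if_neg hP]
        apply Finset.sum_eq_zero
        intro h _; rw [if_neg (by omega)]
    have hj : ∀ i ∈ Icc 1 N,
        (∑ j ∈ Icc 1 N, if i ≤ j ∧ j ≤ n then ∑ h ∈ Icc j (N - j), (N + 1 - i - h) else 0)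
          = ∑ j ∈ Icc i n, ∑ h ∈ Icc j (N - j), (N + 1 - i - h) := by
      intro i hi
      simp only [mem_Icc] at hi
      rw [← Finset.sum_filter]
      congr 1
      ext j; simp only [mem_filter, mem_Icc]; omega
    calc (∑ i ∈ Icc 1 N, ∑ j ∈ Icc 1 N, ∑ h ∈ Icc 1 N, ∑ k ∈ Icc 1 N,
            if i ≤ j ∧ j ≤ h ∧ h ≤ k ∧ j ≤ n ∧ i + k ≤ N ∧ j + h ≤ N then 1 else 0)
        = ∑ i ∈ Icc 1 N, ∑ j ∈ Icc i n, ∑ h ∈ Icc j (N - j), (N + 1 - i - h) := by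
          refine Finset.sum_congr rfl fun i hi => ?_
          rw [← hj i hi]
          refine Finset.sum_congr rfl fun j hjm => ?_
          rw [← hh i hi j hjm]
          refine Finset.sum_congr rfl fun h hhm => ?_
          exact hk i hi j hjm h hhm
      _ = ∑ i ∈ Icc 1 n, ∑ j ∈ Icc i n, ∑ h ∈ Icc j (N - j), (N + 1 - i - h) := by
          refine (Finset.sum_subset (Finset.Icc_subset_Icc_right (by omega)) ?_).symm
          intro i hi hi2
          simp only [mem_Icc, not_and, not_le] at hi hi2
          rw [Icc_eq_empty (by simp only [not_le]; omega)]
          simp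
  rw [step1]
  -- Step 2: evaluate the triple sum.
  have e2 : ∀ i ∈ Icc 1 n,
      2 * ((∑ j ∈ Icc i n, ∑ h ∈ Icc j (N - j), (N + 1 - i - h) : ℕ) : ℤ)
        = ((N : ℤ) + 2 - 2 * i) * ((n : ℤ) + 1 - i) * ((m : ℤ) + 1 - i) := by
    intro i hi
    simp only [mem_Icc] at hi
    have e1 : ∀ j ∈ Icc i n,
        2 * ((∑ h ∈ Icc j (N - j), (N + 1 - i - h) : ℕ) : ℤ)
          = ((N : ℤ) + 2 - 2 * i) * (((N : ℤ) + 1) - 2 * j) := by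
      intro j hj
      simp only [mem_Icc] at hj
      have hc : ((∑ h ∈ Icc j (N - j), (N + 1 - i - h) : ℕ) : ℤ)
          = ∑ h ∈ Icc j (N - j), (((N : ℤ) + 1 - i) - h) := by
        push_cast
        refine Finset.sum_congr rfl fun h hh => ?_
        simp only [mem_Icc] at hh
        omega
      rw [hc, mul_comm, card_quadruples_sum_linear]
      have h1 : ((N - j + 1 - j : ℕ) : ℤ) = (N : ℤ) + 1 - 2 * j := by omega
      have h2 : ((N - j : ℕ) : ℤ) = (N : ℤ) - j := by omega
      rw [h1, h2]; ring
    rw [Nat.cast_sum, Finset.mul_sum, Finset.sum_congr rfl e1, ← Finset.mul_sum,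
      card_quadruples_sum_linear2]
    have h1 : ((n + 1 - i : ℕ) : ℤ) = (n : ℤ) + 1 - i := by omega
    rw [h1]
    have h2 : (N : ℤ) = (n : ℤ) + m := by push_cast [hN]; ring
    rw [h2]; ring
  have main : 12 * ((∑ i ∈ Icc 1 n, ∑ j ∈ Icc i n, ∑ h ∈ Icc j (N - j), (N + 1 - i - h) : ℕ) : ℤ)
      = 3 * ((n : ℤ) * (n + 1) * (m * (m + 1))) := by
    rw [Nat.cast_sum]
    have key : (12 : ℤ) * ∑ i ∈ Icc 1 n,
          ((∑ j ∈ Icc i n, ∑ h ∈ Icc j (N - j), (N + 1 - i - h) : ℕ) : ℤ)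
        = 6 * ∑ i ∈ Icc 1 n,
            ((n : ℤ) + m + 2 - 2 * i) * ((n : ℤ) + 1 - i) * ((m : ℤ) + 1 - i) := by
      rw [Finset.mul_sum, Finset.mul_sum]
      refine Finset.sum_congr rfl fun i hi => ?_
      have h0 := e2 i hi
      have h2 : (N : ℤ) = (n : ℤ) + m := by push_cast [hN]; ring
      rw [h2] at h0
      linarith
    rw [key, card_quadruples_sum_cubic]; ring
  have hc2 : ∀ a : ℕ, (a + 1).choose 2 * 2 = (a + 1) * a := by
    intro a
    rw [Nat.choose_two_right, Nat.add_sub_cancel, Nat.div_mul_cancel]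
    have := Nat.even_mul_succ_self a
    rw [mul_comm] at this
    exact this.two_dvd
  have h4 : ((n + 1).choose 2 * (m + 1).choose 2) * 4 = (n * (n + 1)) * (m * (m + 1)) := by
    calc ((n + 1).choose 2 * (m + 1).choose 2) * 4
        = ((n + 1).choose 2 * 2) * ((m + 1).choose 2 * 2) := by ring
      _ = ((n + 1) * n) * ((m + 1) * m) := by rw [hc2 n, hc2 m]
      _ = (n * (n + 1)) * (m * (m + 1)) := by ring
  have h5 : (((n + 1).choose 2 * (m + 1).choose 2 : ℕ) : ℤ) * 4
      = ((n : ℤ) * (n + 1)) * ((m : ℤ) * (m + 1)) := by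
    exact_mod_cast congrArg (Nat.cast : ℕ → ℤ) h4
  have h6 : ((∑ i ∈ Icc 1 n, ∑ j ∈ Icc i n, ∑ h ∈ Icc j (N - j), (N + 1 - i - h) : ℕ) : ℤ)
      = (((n + 1).choose 2 * (m + 1).choose 2 : ℕ) : ℤ) := by linarith
  exact_mod_cast h6
end

section
/- Let K be a field, S = K[x_1,...,x_n], f_1,...,f_n a K-basis of S_1, and I ⊂ S a graded ideal. Consider S/I with the contraction maps τ_{f^a} on it. For a ∈ ℕ^n with |a| = d < e, the kernel of τ_{f^a}: (S/I)_e → (S/I)_{e-d} equals the intersection over j = 1,...,n of the kernels of τ_{f^{a+ε_j}}: (S/I)_e → (S/I)_{e-d-1}. -/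
/-!
Since `τ_{f^{a+ε_j}} = τ_{f_j} ∘ τ_{f^a}`, only the inclusion `⋂_j ker τ_{f^{a+ε_j}} ⊆ ker τ_{f^a}`
needs an argument. If `l` lies in every `ker τ_{f^{a+ε_j}}`, then `u = τ_{f^a}(l)` is a form of
degree `e - d > 0` killed by every `τ_{f_j}`, hence by every `τ_{x_i}`, because the `f_j` span
`S_1 ∋ x_i`. But the coefficient of `x^b` in `u` is the coefficient of `x^{b-ε_i}` in
`τ_{x_i}(u)` whenever `b_i > 0`, so `u` is a constant of positive degree, i.e. `u = 0`.
-/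

open MvPolynomial

attribute [local instance] MvPolynomial.gradedAlgebra

/-- The contraction by a single monomial `x^a`: `τ_{x^a}(x^b) = x^{b-a}` if `a ≤ b`
componentwise, and `0` otherwise, extended `K`-linearly in the argument. -/
noncomputable def tauMon {K : Type*} [CommSemiring K] {n : ℕ} (a : Fin n →₀ ℕ)
    (l : MvPolynomial (Fin n) K) : MvPolynomial (Fin n) K :=
  ∑ b ∈ l.support, if a ≤ b then monomial (b - a) (l.coeff b) else 0

/-- The contraction `τ_g = ∑_a g_a τ_{x^a}` by a polynomial `g = ∑_a g_a x^a`. -/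
noncomputable def tau {K : Type*} [CommSemiring K] {n : ℕ}
    (g l : MvPolynomial (Fin n) K) : MvPolynomial (Fin n) K :=
  ∑ a ∈ g.support, g.coeff a • tauMon a l

section Contraction

variable {K : Type*} [CommSemiring K] {n : ℕ}

lemma coeff_tauMon (a c : Fin n →₀ ℕ) (l : MvPolynomial (Fin n) K) :
    (tauMon a l).coeff c = l.coeff (c + a) := by
  rw [tauMon, coeff_sum, Finset.sum_eq_single (c + a)]
  · simp [coeff_monomial]
  · intro b _ hb
    split_ifs with hab
    · rw [coeff_monomial, if_neg]
      rintro rfl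
      exact hb (tsub_add_cancel_of_le hab).symm
    · rfl
  · intro h
    simp [notMem_support_iff.mp h]

lemma coeff_tau (g l : MvPolynomial (Fin n) K) (c : Fin n →₀ ℕ) :
    (tau g l).coeff c = ∑ a ∈ g.support, g.coeff a * l.coeff (c + a) := by
  simp [tau, coeff_sum, coeff_tauMon]

lemma tauMon_smul (a : Fin n →₀ ℕ) (r : K) (l : MvPolynomial (Fin n) K) :
    tauMon a (r • l) = r • tauMon a l := by
  ext c; simp [coeff_tauMon]

lemma tauMon_tauMon (a b : Fin n →₀ ℕ) (l : MvPolynomial (Fin n) K) :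
    tauMon a (tauMon b l) = tauMon (a + b) l := by
  ext c; simp [coeff_tauMon, add_assoc]

lemma tau_eq_sum (g l : MvPolynomial (Fin n) K) :
    tau g l = Finsupp.sum (AddMonoidAlgebra.coeff g) fun a r => r • tauMon a l := rfl

lemma tau_monomial (a : Fin n →₀ ℕ) (r : K) (l : MvPolynomial (Fin n) K) :
    tau (monomial a r) l = r • tauMon a l := by
  rw [tau_eq_sum]
  exact Finsupp.sum_single_index (zero_smul _ _)

lemma tau_X (i : Fin n) (l : MvPolynomial (Fin n) K) :
    tau (X i) l = tauMon (Finsupp.single i 1) l := by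
  rw [X, tau_monomial, one_smul]

lemma tau_zero_left (l : MvPolynomial (Fin n) K) : tau 0 l = 0 := by
  simp [tau]

lemma tau_add_left (g h l : MvPolynomial (Fin n) K) :
    tau (g + h) l = tau g l + tau h l := by
  simp only [tau_eq_sum]
  exact Finsupp.sum_add_index' (fun _ => zero_smul _ _) fun _ r s => add_smul r s _

lemma tau_smul_left (r : K) (g l : MvPolynomial (Fin n) K) :
    tau (r • g) l = r • tau g l := by
  induction g using induction_on' with
  | monomial a s => rw [smul_monomial, tau_monomial, tau_monomial, smul_smul, smul_eq_mul]
  | add p q hp hq => rw [smul_add, tau_add_left, tau_add_left, hp, hq, smul_add]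

lemma tau_zero_right (g : MvPolynomial (Fin n) K) : tau g 0 = 0 := by
  ext c; simp [coeff_tau]

lemma tau_add_right (g l m : MvPolynomial (Fin n) K) :
    tau g (l + m) = tau g l + tau g m := by
  ext c; simp [coeff_tau, mul_add, Finset.sum_add_distrib]

lemma tau_mul (g h l : MvPolynomial (Fin n) K) :
    tau (g * h) l = tau g (tau h l) := by
  induction g using induction_on' with
  | monomial a r =>
    induction h using induction_on' with
    | monomial b s =>
      rw [monomial_mul, tau_monomial, tau_monomial, tau_monomial, tauMon_smul,
        tauMon_tauMon, smul_smul]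
    | add p q hp hq => rw [mul_add, tau_add_left, hp, hq, tau_add_left, tau_add_right]
  | add p q hp hq => rw [add_mul, tau_add_left, hp, hq, tau_add_left]

lemma tau_eq_zero_of_mem_span {ι : Type*} {f : ι → MvPolynomial (Fin n) K}
    {p u : MvPolynomial (Fin n) K} (hp : p ∈ Submodule.span K (Set.range f))
    (hf : ∀ j, tau (f j) u = 0) : tau p u = 0 := by
  induction hp using Submodule.span_induction with
  | mem _ h => obtain ⟨j, rfl⟩ := h; exact hf j
  | zero => exact tau_zero_left u
  | add _ _ _ _ hp hq => rw [tau_add_left, hp, hq, add_zero]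
  | smul r _ _ hp => rw [tau_smul_left, hp, smul_zero]

lemma MvPolynomial.IsHomogeneous.tau {g l : MvPolynomial (Fin n) K} {d e : ℕ}
    (hg : g.IsHomogeneous d) (hl : l.IsHomogeneous e) : (tau g l).IsHomogeneous (e - d) := by
  intro c hc
  obtain ⟨a, ha, hca⟩ := Finset.exists_ne_zero_of_sum_ne_zero (coeff_tau g l c ▸ hc)
  have hda : a.degree = d := by
    rw [Finsupp.degree_eq_weight_one]; exact hg (mem_support_iff.mp ha)
  have hdca : (c + a).degree = e := by
    rw [Finsupp.degree_eq_weight_one]; exact hl (right_ne_zero_of_mul hca)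
  rw [Pi.one_def, ← Finsupp.degree_eq_weight_one]
  rw [map_add] at hdca
  omega

lemma eq_zero_of_tau_X_eq_zero {u : MvPolynomial (Fin n) K} {m : ℕ}
    (hu : u.IsHomogeneous m) (hm : 0 < m) (hX : ∀ i, tau (X i) u = 0) : u = 0 := by
  ext b
  rw [coeff_zero]
  obtain rfl | hb := eq_or_ne b 0
  · exact hu.coeff_eq_zero (by simp; omega)
  obtain ⟨i, hi⟩ : ∃ i, b i ≠ 0 := by simpa [Finsupp.ext_iff] using hb
  have hle : Finsupp.single i 1 ≤ b := by rw [Finsupp.single_le_iff]; omega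
  have := congrArg (coeff (b - Finsupp.single i 1)) (hX i)
  rwa [tau_X, coeff_tauMon, tsub_add_cancel_of_le hle] at this

end Contraction

lemma MvPolynomial.span_eq_span_X_of_linearIndependent {σ K : Type*} [Fintype σ] [Field K]
    {f : σ → MvPolynomial σ K} (hf1 : ∀ j, (f j).IsHomogeneous 1) (hfb : LinearIndependent K f) :
    Submodule.span K (Set.range f) = Submodule.span K (Set.range X) := by
  have : FiniteDimensional K (Submodule.span K (Set.range (X : σ → MvPolynomial σ K))) :=
    FiniteDimensional.span_of_finite K (Set.finite_range _)
  apply Submodule.eq_of_le_of_finrank_le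
  · rw [← homogeneousSubmodule_one_eq_span_X, Submodule.span_le]
    rintro _ ⟨j, rfl⟩
    exact hf1 j
  · rw [finrank_span_eq_card hfb]
    exact finrank_range_le_card X

lemma Finset.prod_pow_add_single {ι M : Type*} [Fintype ι] [DecidableEq ι] [CommMonoid M]
    (f : ι → M) (a : ι →₀ ℕ) (j : ι) :
    ∏ k, f k ^ (a + Finsupp.single j 1 : ι →₀ ℕ) k = f j * ∏ k, f k ^ a k := by
  simp only [Finsupp.coe_add, Pi.add_apply, pow_add, Finset.prod_mul_distrib]
  rw [mul_comm, Fintype.prod_eq_single j fun k hk => by rw [Finsupp.single_eq_of_ne hk, pow_zero]]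
  simp

theorem kernel_tau_eq_inter_kernels_general {K : Type*} [Field K] {n : ℕ}
    (I : Ideal (MvPolynomial (Fin n) K))
    (f : Fin n → MvPolynomial (Fin n) K)
    (hf1 : ∀ j, (f j).IsHomogeneous 1)
    (hfb : LinearIndependent K f)
    (sec : (MvPolynomial (Fin n) K ⧸ I) →ₗ[K] MvPolynomial (Fin n) K)
    (a : Fin n →₀ ℕ) (d e : ℕ) (hd : (∑ j, a j) = d) (hde : d < e)
    (x : MvPolynomial (Fin n) K ⧸ I) (hx : (sec x).IsHomogeneous e) :
    tau (∏ j, f j ^ a j) (sec x) = 0 ↔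
      ∀ j : Fin n, tau (∏ k, f k ^ (((a + Finsupp.single j 1 : Fin n →₀ ℕ)) k)) (sec x) = 0 := by
  simp only [Finset.prod_pow_add_single, tau_mul]
  refine ⟨fun h j => by rw [h, tau_zero_right], fun h => ?_⟩
  have hfa : (∏ j, f j ^ a j).IsHomogeneous d := by
    simpa [← hd] using IsHomogeneous.prod _ _ _ fun j _ => (hf1 j).pow (a j)
  refine eq_zero_of_tau_X_eq_zero (hfa.tau hx) (by omega) fun i => ?_
  refine tau_eq_zero_of_mem_span ?_ h
  rw [span_eq_span_X_of_linearIndependent hf1 hfb]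
  exact Submodule.subset_span ⟨i, rfl⟩

/-- Let `I ⊆ S = K[x_1,…,x_n]` be a graded ideal, `f_1,…,f_n` a `K`-basis of `S_1`
(equivalently, `n` linearly independent linear forms), and view `S/I` as a graded
`K`-vector subspace of `S` via a `K`-linear section `sec` of the projection whose image
is stable under all contractions.  For `a ∈ ℕⁿ` with `|a| = d < e`, the kernel of
`τ_{f^a} : (S/I)_e → (S/I)_{e-d}` equals the intersection of the kernels of the maps
`τ_{f^{a+ε_j}} : (S/I)_e → (S/I)_{e-d-1}`, `j = 1,…,n`. -/
theorem kernel_tau_eq_inter_kernels {K : Type*} [Field K] {n : ℕ}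
    (I : Ideal (MvPolynomial (Fin n) K))
    (hI : Ideal.IsHomogeneous (homogeneousSubmodule (Fin n) K) I)
    (f : Fin n → MvPolynomial (Fin n) K)
    (hf1 : ∀ j, (f j).IsHomogeneous 1)
    (hfb : LinearIndependent K f)
    (sec : (MvPolynomial (Fin n) K ⧸ I) →ₗ[K] MvPolynomial (Fin n) K)
    (hsec : ∀ x, Ideal.Quotient.mk I (sec x) = x)
    (hstable : ∀ (g : MvPolynomial (Fin n) K) (x), ∃ y, sec y = tau g (sec x))
    (a : Fin n →₀ ℕ) (d e : ℕ) (hd : (∑ j, a j) = d) (hde : d < e)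
    (x : MvPolynomial (Fin n) K ⧸ I) (hx : (sec x).IsHomogeneous e) :
    tau (∏ j, f j ^ a j) (sec x) = 0 ↔
      ∀ j : Fin n, tau (∏ k, f k ^ (((a + Finsupp.single j 1 : Fin n →₀ ℕ)) k)) (sec x) = 0 :=
  kernel_tau_eq_inter_kernels_general I f hf1 hfb sec a d e hd hde x hx
end

section
/- Let I be a strongly stable monomial ideal in S = K[x_1,...,x_n] and x^a a monomial of degree d > 1. Write a' for the exponent vector of x^a/x_{min(a)} where min(a) = min{i : a_i > 0}. Then x^a ∉ I if and only if min(a') − min(a) + 1 ≤ |{x^b : |b| = d, x^b ∉ I, x^b/x_{min(b)} = x^{a'}}|. -/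
/-- Let `M` be (the set of exponent vectors of monomials of) a strongly stable monomial
ideal in `K[x_1,…,x_n]` and `x^a` a monomial of degree `d > 1`.  Let `i0 = min(a)` be the
least index in the support of `a`, `a' = a − ε_{i0}` (so `x^{a'} = x^a/x_{min(a)}`) and
`i1 = min(a')`.  Then `x^a ∉ M` iff
`min(a') − min(a) + 1 ≤ #{x^b : |b| = d, x^b ∉ M, x^b/x_{min(b)} = x^{a'}}`. -/
theorem not_mem_strongly_stable_iff {n : ℕ} (M : Set (Fin n →₀ ℕ))
    (hMideal : ∀ a ∈ M, ∀ b : Fin n →₀ ℕ, a + b ∈ M)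
    (hMstable : ∀ a ∈ M, ∀ i j : Fin n, j ≤ i → a i ≠ 0 →
      a - Finsupp.single i 1 + Finsupp.single j 1 ∈ M)
    (a : Fin n →₀ ℕ) (d : ℕ) (hd : (∑ k, a k) = d) (hd1 : 1 < d)
    (i0 : Fin n) (hi0 : a i0 ≠ 0) (hi0min : ∀ i, a i ≠ 0 → i0 ≤ i)
    (i1 : Fin n) (hi1 : (a - Finsupp.single i0 1 : Fin n →₀ ℕ) i1 ≠ 0)
    (hi1min : ∀ i, (a - Finsupp.single i0 1 : Fin n →₀ ℕ) i ≠ 0 → i1 ≤ i) :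
    a ∉ M ↔
      (i1 : ℕ) - (i0 : ℕ) + 1 ≤
        Set.ncard {b : Fin n →₀ ℕ | (∑ k, b k) = d ∧ b ∉ M ∧
          ∃ j : Fin n, b = (a - Finsupp.single i0 1) + Finsupp.single j 1 ∧
            ∀ i, b i ≠ 0 → j ≤ i} := by
  classical
  set a' : Fin n →₀ ℕ := a - Finsupp.single i0 1 with ha'
  set f : Fin n → (Fin n →₀ ℕ) := fun j => a' + Finsupp.single j 1 with hf
  -- basic facts
  have hsingle_sum : ∀ j : Fin n, (∑ k, (Finsupp.single j 1 : Fin n →₀ ℕ) k) = 1 := by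
    intro j; simp [Finsupp.single_apply]
  have hle : ∀ i, (Finsupp.single i0 1 : Fin n →₀ ℕ) i ≤ a i := by
    intro i
    rcases eq_or_ne i i0 with rfl | h
    · simpa [Finsupp.single_apply] using Nat.one_le_iff_ne_zero.mpr hi0
    · simp [Finsupp.single_apply, Ne.symm h]
  have ha_eq : a = f i0 := by
    ext i
    simp only [hf, ha', Finsupp.add_apply, Finsupp.tsub_apply]
    exact (Nat.sub_add_cancel (hle i)).symm
  have hsum_f : ∀ j, (∑ k, f j k) = (∑ k, a' k) + 1 := by
    intro j
    simp [hf, Finsupp.add_apply, Finset.sum_add_distrib, hsingle_sum j]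
  have hsum_a' : (∑ k, a' k) + 1 = d := by
    rw [← hsum_f i0, ← ha_eq, hd]
  have hi0i1 : i0 ≤ i1 := by
    apply hi0min
    intro h
    apply hi1
    simp [ha', Finsupp.tsub_apply, h]
  -- downward closedness of membership
  have hdown : ∀ j j' : Fin n, j ≤ j' → f j' ∈ M → f j ∈ M := by
    intro j j' hjj' hmem
    have h1 : f j' j' ≠ 0 := by
      simp [hf, Finsupp.add_apply, Finsupp.single_apply]
    have := hMstable _ hmem j' j hjj' h1
    have h2 : f j' - Finsupp.single j' 1 = a' := by
      ext i; simp [hf, Finsupp.tsub_apply]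
    rwa [h2] at this
  have hfinj : Function.Injective f := by
    intro j j' h
    have := add_left_cancel h
    exact (Finsupp.single_left_inj one_ne_zero).mp this
  set T : Set (Fin n) := {j | j ≤ i1 ∧ f j ∉ M} with hT
  have hSeq : {b : Fin n →₀ ℕ | (∑ k, b k) = d ∧ b ∉ M ∧
      ∃ j : Fin n, b = (a - Finsupp.single i0 1) + Finsupp.single j 1 ∧
        ∀ i, b i ≠ 0 → j ≤ i} = f '' T := by
    ext b
    constructor
    · rintro ⟨hdeg, hnm, j, hbeq, hmin⟩
      have hbf : b = f j := hbeq
      refine ⟨j, ⟨?_, hbf ▸ hnm⟩, hbf.symm⟩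
      apply hmin
      rw [hbf]
      simp only [hf, Finsupp.add_apply, Finsupp.single_apply]
      intro h
      exact hi1 (by by_cases hji : j = i1 <;> simp [hji] at h <;> omega)
    · rintro ⟨j, ⟨hji1, hnm⟩, rfl⟩
      refine ⟨by rw [hsum_f j]; exact hsum_a', hnm, j, rfl, ?_⟩
      intro i hbi
      simp only [hf, Finsupp.add_apply, Finsupp.single_apply] at hbi
      by_cases hij : j = i
      · exact le_of_eq hij
      · simp [hij] at hbi
        exact le_trans hji1 (hi1min i hbi)
  rw [hSeq, Set.ncard_image_of_injective _ hfinj]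
  have hTfin : T.Finite := Set.toFinite T
  constructor
  · -- a ∉ M → card
    intro hnm
    have hsub : Set.Icc i0 i1 ⊆ T := by
      rintro j ⟨h0j, hj1⟩
      refine ⟨hj1, fun hmem => hnm ?_⟩
      rw [ha_eq]
      exact hdown i0 j h0j hmem
    calc (i1 : ℕ) - (i0 : ℕ) + 1 = (Finset.Icc i0 i1).card := by
          rw [Fin.card_Icc]; omega
      _ = (Set.Icc i0 i1).ncard := by rw [← Finset.coe_Icc, Set.ncard_coe_finset]
      _ ≤ T.ncard := Set.ncard_le_ncard hsub hTfin
  · -- card → a ∉ M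
    intro hcard hmem
    have hsub : T ⊆ Set.Ioc i0 i1 := by
      rintro j ⟨hj1, hnm⟩
      refine ⟨?_, hj1⟩
      by_contra h
      push_neg at h
      exact hnm (hdown j i0 h (ha_eq ▸ hmem))
    have : T.ncard ≤ (Set.Ioc i0 i1).ncard :=
      Set.ncard_le_ncard hsub (Set.toFinite _)
    rw [← Finset.coe_Ioc, Set.ncard_coe_finset, Fin.card_Ioc] at this
    omega
end

section
/- Let n ≤ m be positive integers and let I be the monomial ideal of S = K[x_1,...,x_{n+m}] generated by {x_i x_j : 1 ≤ i ≤ j ≤ n+m, i+j ≤ n+m, i ≤ n}. Then the number of degree-4 monomials in I^2 that are products x_i x_j x_h x_k with 1 ≤ i ≤ j ≤ h ≤ k ≤ n+m, j ≤ n, i+k ≤ n+m, j+h ≤ n+m equals dim_K (I^2)_4, and this dimension equals binomial(n+1,2)·binomial(m+1,2). -/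
/-!
`I` is generated by degree-2 monomials, so `(I²)₄` is spanned by the products
`x_a x_b · x_c x_d` of two generators and its dimension is the number of distinct such products.
Sorting the indices as `i ≤ j ≤ h ≤ k`, both `x_i x_k` and `x_j x_h` are again generators, which
is exactly the list of inequalities; conversely each such quadruple gives the product
`x_i x_k · x_j x_h`, and sorted quadruples are determined by their monomial. The quadruples are
counted by induction on `n` with `n + m` fixed: passing from `n` to `n + 1` adds those with
`j = n + 1`, and the reflection `(i, h) ↦ (n + 2 - i, n + m + 1 - h)` pairs their fibre sizes
to the constant sum `m + 1`.
-/

open Finset Finsupp MvPolynomial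

namespace MvPolynomial

variable {σ R : Type*} [CommSemiring R]

open Pointwise in
theorem span_monomial_one_mul_span_monomial_one (A B : Set (σ →₀ ℕ)) :
    Ideal.span ((fun a => monomial a (1 : R)) '' A) * Ideal.span ((fun a => monomial a 1) '' B) =
      Ideal.span ((fun a => monomial a 1) '' (A + B)) := by
  rw [Ideal.span_mul_span', ← Set.image2_mul, Set.image2_image_left, Set.image2_image_right,
    ← Set.image2_add, Set.image_image2]
  simp only [monomial_mul, one_mul]

theorem restrictScalars_span_inf_homogeneousSubmodule {T : Set (MvPolynomial σ R)} {d : ℕ}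
    (hT : ∀ t ∈ T, t.IsHomogeneous d) :
    (Ideal.span T).restrictScalars R ⊓ homogeneousSubmodule σ R d = Submodule.span R T := by
  refine le_antisymm ?_ (le_inf (Submodule.span_le_restrictScalars R _ T) (Submodule.span_le.2 hT))
  rintro x ⟨hxT, hxd⟩
  rw [SetLike.mem_coe, mem_homogeneousSubmodule] at hxd
  rw [← homogeneousComponent_eq_self hxd]
  suffices (Ideal.span T).restrictScalars R ≤
      (Submodule.span R T).comap (homogeneousComponent d) from this hxT
  rw [Ideal.span, ← Submodule.span_smul_of_span_eq_top (basisMonomials σ R).span_eq,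
    Submodule.span_le]
  rintro _ ⟨_, ⟨u, rfl⟩, t, ht, rfl⟩
  have hmul : monomial u 1 * t ∈ homogeneousSubmodule σ R (u.degree + d) :=
    (isHomogeneous_monomial 1 rfl).mul (hT t ht)
  change homogeneousComponent d (monomial u 1 * t) ∈ Submodule.span R T
  rw [homogeneousComponent_of_mem hmul]
  split_ifs with hu
  · obtain rfl : u = 0 := (Finsupp.degree_eq_zero_iff u).1 (by omega)
    simpa using Submodule.subset_span ht
  · exact zero_mem _

theorem finrank_span_monomial_one {K : Type*} [Field K] {A : Set (σ →₀ ℕ)} (hA : A.Finite) :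
    Module.finrank K (Submodule.span K ((fun a => monomial a (1 : K)) '' A)) = A.ncard := by
  rw [← coe_basisMonomials]
  have := (hA.image (basisMonomials σ K)).fintype
  rw [finrank_span_set_eq_card ((basisMonomials σ K).linearIndepOn A).id_image,
    Set.toFinset_card, Fintype.card_eq_nat_card, Nat.card_coe_set_eq]
  exact Set.ncard_image_of_injective A (basisMonomials σ K).injective

end MvPolynomial

theorem Finsupp.eq_of_sorted_of_single_add_eq {σ : Type*} [LinearOrder σ]
    {i j h k i' j' h' k' : σ} (hs : i ≤ j ∧ j ≤ h ∧ h ≤ k) (hs' : i' ≤ j' ∧ j' ≤ h' ∧ h' ≤ k')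
    (he : single i 1 + single j 1 + single h 1 + single k 1 =
      single i' 1 + single j' 1 + single h' 1 + single k' 1) :
    i = i' ∧ j = j' ∧ h = h' ∧ k = k' := by
  have hperm : List.Perm [i, j, h, k] [i', j', h', k'] := by
    have hm := congrArg toMultiset he
    simp only [map_add, toMultiset_single, one_smul] at hm
    exact Multiset.coe_eq_coe.1 hm
  simpa using hperm.eq_of_pairwise' (r := (· ≤ ·)) (by grind [List.pairwise_cons])
    (by grind [List.pairwise_cons])

namespace MonomialIdealSq

def generatorExponents (n N : ℕ) : Set (Fin N →₀ ℕ) :=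
  {a | ∃ i j : Fin N, i ≤ j ∧ (i : ℕ) + 1 + ((j : ℕ) + 1) ≤ N ∧ (i : ℕ) + 1 ≤ n ∧
    a = single i 1 + single j 1}

def admissibleExponents (n N : ℕ) : Set (Fin N →₀ ℕ) :=
  {a | ∃ i j h k : Fin N, i ≤ j ∧ j ≤ h ∧ h ≤ k ∧
    (j : ℕ) + 1 ≤ n ∧ ((i : ℕ) + 1) + ((k : ℕ) + 1) ≤ N ∧ ((j : ℕ) + 1) + ((h : ℕ) + 1) ≤ N ∧
    a = single i 1 + single j 1 + single h 1 + single k 1}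

def admissibleQuads (n N : ℕ) : Finset (ℕ × ℕ × ℕ × ℕ) :=
  {x ∈ range N ×ˢ range N ×ˢ range N ×ˢ range N | x.1 ≤ x.2.1 ∧ x.2.1 ≤ x.2.2.1 ∧
    x.2.2.1 ≤ x.2.2.2 ∧ x.2.1 + 1 ≤ n ∧ x.1 + 1 + (x.2.2.2 + 1) ≤ N ∧ x.2.1 + 1 + (x.2.2.1 + 1) ≤ N}

theorem mem_admissibleQuads {n N i j h k : ℕ} :
    (i, j, h, k) ∈ admissibleQuads n N ↔ i ≤ j ∧ j ≤ h ∧ h ≤ k ∧ j + 1 ≤ n ∧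
      i + 1 + (k + 1) ≤ N ∧ j + 1 + (h + 1) ≤ N := by
  simp only [admissibleQuads, mem_filter, mem_product, mem_range]
  omega

theorem ncard_admissibleExponents (n N : ℕ) :
    (admissibleExponents n N).ncard = #(admissibleQuads n N) := by
  let F : Set (Fin N × Fin N × Fin N × Fin N) := {x | x.1 ≤ x.2.1 ∧ x.2.1 ≤ x.2.2.1 ∧
    x.2.2.1 ≤ x.2.2.2 ∧ (x.2.1 : ℕ) + 1 ≤ n ∧ ((x.1 : ℕ) + 1) + ((x.2.2.2 : ℕ) + 1) ≤ N ∧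
    ((x.2.1 : ℕ) + 1) + ((x.2.2.1 : ℕ) + 1) ≤ N}
  have himage : admissibleExponents n N =
      (fun x => single x.1 1 + single x.2.1 1 + single x.2.2.1 1 + single x.2.2.2 1) '' F := by
    ext a
    simp only [admissibleExponents, F, Set.mem_image, Prod.exists, Set.mem_ofPred_eq]
    grind
  have hinj : Set.InjOn
      (fun x => single x.1 1 + single x.2.1 1 + single x.2.2.1 1 + single x.2.2.2 1) F := by
    rintro ⟨i, j, h, k⟩ hx ⟨i', j', h', k'⟩ hx' he
    obtain ⟨rfl, rfl, rfl, rfl⟩ :=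
      eq_of_sorted_of_single_add_eq ⟨hx.1, hx.2.1, hx.2.2.1⟩ ⟨hx'.1, hx'.2.1, hx'.2.2.1⟩ he
    rfl
  rw [himage, hinj.ncard_image, ← Set.ncard_coe_finset]
  refine Set.ncard_congr (fun x _ => ((x.1 : ℕ), (x.2.1 : ℕ), (x.2.2.1 : ℕ), (x.2.2.2 : ℕ)))
    ?_ ?_ ?_
  · rintro ⟨i, j, h, k⟩ hx
    simp only [F, Set.mem_ofPred_eq, Fin.le_def] at hx
    simpa only [Finset.mem_coe, mem_admissibleQuads] using hx
  · rintro ⟨i, j, h, k⟩ ⟨i', j', h', k'⟩ - - he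
    simp only [Prod.mk.injEq, ← Fin.ext_iff] at he ⊢
    exact he
  · rintro ⟨i, j, h, k⟩ hx
    simp only [Finset.mem_coe, mem_admissibleQuads] at hx
    refine ⟨(⟨i, by omega⟩, ⟨j, by omega⟩, ⟨h, by omega⟩, ⟨k, by omega⟩), ?_, rfl⟩
    simpa only [F, Set.mem_ofPred_eq, Fin.mk_le_mk] using hx

open Pointwise in
theorem generatorExponents_add_generatorExponents (n N : ℕ) :
    generatorExponents n N + generatorExponents n N = admissibleExponents n N := by
  ext e
  constructor
  · rintro ⟨_, ⟨a, b, hab, hab', ha, rfl⟩, _, ⟨c, d, hcd, hcd', hc, rfl⟩, rfl⟩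
    beta_reduce
    wlog hac : a ≤ c generalizing a b c d
    · rw [add_comm (single a 1 + single b 1)]
      exact this c d hcd hcd' hc a b hab hab' ha (le_of_not_ge hac)
    rcases le_total b c with hbc | hcb
    · exact ⟨a, b, c, d, hab, hbc, hcd, by omega, by omega, by omega, by ac_rfl⟩
    rcases le_total b d with hbd | hdb
    · exact ⟨a, c, b, d, hac, hcb, hbd, by omega, by omega, by omega, by ac_rfl⟩
    · exact ⟨a, c, d, b, hac, hcd, hdb, by omega, by omega, by omega, by ac_rfl⟩
  · rintro ⟨i, j, h, k, hij, hjh, hhk, hj, hik, hjh', rfl⟩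
    exact ⟨_, ⟨i, k, hij.trans (hjh.trans hhk), hik, by omega, rfl⟩,
      _, ⟨j, h, hjh, hjh', hj, rfl⟩, by ac_rfl⟩

theorem isHomogeneous_monomial_of_mem_admissibleExponents {R : Type*} [CommSemiring R]
    {n N : ℕ} {a : Fin N →₀ ℕ} (ha : a ∈ admissibleExponents n N) :
    (monomial a (1 : R)).IsHomogeneous 4 := by
  obtain ⟨i, j, h, k, -, -, -, -, -, -, rfl⟩ := ha
  exact isHomogeneous_monomial 1 (by simp only [map_add, degree_single])

theorem admissibleExponents_finite (n N : ℕ) : (admissibleExponents n N).Finite :=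
  (Set.finite_range fun x : Fin N × Fin N × Fin N × Fin N =>
    single x.1 1 + single x.2.1 1 + single x.2.2.1 1 + single x.2.2.2 1).subset
    fun _ ⟨i, j, h, k, _, _, _, _, _, _, ha⟩ => ⟨(i, j, h, k), ha.symm⟩

theorem two_mul_sum_sub_sub_eq (n m : ℕ) :
    2 * ∑ p ∈ range (n + 1) ×ˢ Ico n m, (n + m - p.1 - p.2) = (n + 1) * (m - n) * (m + 1) := by
  have hreflect : ∑ p ∈ range (n + 1) ×ˢ Ico n m, (n + m - p.1 - p.2) =
      ∑ p ∈ range (n + 1) ×ˢ Ico n m, (p.1 + p.2 + 1 - n) := by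
    refine sum_nbij' (fun p => (n - p.1, n + m - 1 - p.2)) (fun p => (n - p.1, n + m - 1 - p.2))
      ?_ ?_ ?_ ?_ ?_ <;> simp only [mem_product, mem_range, mem_Ico, Prod.ext_iff] <;> omega
  calc 2 * ∑ p ∈ range (n + 1) ×ˢ Ico n m, (n + m - p.1 - p.2)
      = ∑ p ∈ range (n + 1) ×ˢ Ico n m, ((n + m - p.1 - p.2) + (p.1 + p.2 + 1 - n)) := by
        rw [sum_add_distrib, ← hreflect, two_mul]
    _ = ∑ p ∈ range (n + 1) ×ˢ Ico n m, (m + 1) :=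
        sum_congr rfl fun p hp => by simp only [mem_product, mem_range, mem_Ico] at hp; omega
    _ = (n + 1) * (m - n) * (m + 1) := by simp

theorem card_filter_admissibleQuads_eq_sum (n m : ℕ) :
    #{x ∈ admissibleQuads (n + 1) (n + 1 + m) | x.2.1 = n} =
      ∑ p ∈ range (n + 1) ×ˢ Ico n m, (n + m - p.1 - p.2) := by
  rw [card_eq_sum_card_fiberwise (f := fun x => (x.1, x.2.2.1)) (t := range (n + 1) ×ˢ Ico n m)]
  · refine sum_congr rfl fun ⟨i, h⟩ hp => ?_
    simp only [mem_product, mem_range, mem_Ico] at hp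
    have hfibre : {x ∈ admissibleQuads (n + 1) (n + 1 + m) | x.2.1 = n ∧ (x.1, x.2.2.1) = (i, h)} =
        (Ico h (n + m - i)).image fun k => (i, n, h, k) := by
      ext ⟨i', j', h', k'⟩
      simp only [mem_filter, mem_image, mem_Ico, mem_admissibleQuads, Prod.mk.injEq]
      constructor
      · rintro ⟨hx, rfl, rfl, rfl⟩
        exact ⟨k', by omega, rfl, rfl, rfl, rfl⟩
      · rintro ⟨k, hk, rfl, rfl, rfl, rfl⟩
        exact ⟨by omega, rfl, rfl, rfl⟩
    rw [filter_filter, hfibre, card_image_of_injective _ fun k k' hk => by simpa using hk,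
      Nat.card_Ico]
  · rintro ⟨i, j, h, k⟩ hx
    simp only [coe_filter, Set.mem_ofPred_eq, mem_admissibleQuads] at hx
    simp only [coe_product, coe_range, coe_Ico, Set.mem_prod, Set.mem_Iio, Set.mem_Ico]
    omega

theorem card_admissibleQuads (n m : ℕ) (hnm : n ≤ m) :
    #(admissibleQuads n (n + m)) = (n + 1).choose 2 * (m + 1).choose 2 := by
  induction n generalizing m with
  | zero =>
    rw [show admissibleQuads 0 (0 + m) = ∅ by ext ⟨i, j, h, k⟩; simp [mem_admissibleQuads]]
    simp
  | succ n ih =>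
    have hsplit : admissibleQuads (n + 1) (n + 1 + m) =
        admissibleQuads n (n + (m + 1)) ∪
          {x ∈ admissibleQuads (n + 1) (n + 1 + m) | x.2.1 = n} := by
      ext ⟨i, j, h, k⟩
      simp only [mem_union, mem_filter, mem_admissibleQuads]
      omega
    have hdisj : Disjoint (admissibleQuads n (n + (m + 1)))
        {x ∈ admissibleQuads (n + 1) (n + 1 + m) | x.2.1 = n} := by
      refine disjoint_left.2 fun ⟨i, j, h, k⟩ hx hx' => ?_
      simp only [mem_filter, mem_admissibleQuads] at hx hx'
      omega
    have hslice := two_mul_sum_sub_sub_eq n m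
    rw [← card_filter_admissibleQuads_eq_sum] at hslice
    rw [hsplit, card_union_of_disjoint hdisj, ih (m + 1) (by omega)]
    obtain ⟨e, rfl⟩ : ∃ e, m = n + 1 + e := ⟨m - (n + 1), by omega⟩
    rw [show n + 1 + e - n = e + 1 by omega] at hslice
    qify at hslice ⊢
    simp only [Nat.cast_choose_two]
    push_cast
    linear_combination (1 / 2 : ℚ) * hslice

end MonomialIdealSq

open MonomialIdealSq in
theorem monomial_count_eq_finrank_I_sq_general (K : Type*) [Field K] (n m : ℕ)
    (hnm : n ≤ m) :
    let I : Ideal (MvPolynomial (Fin (n + m)) K) :=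
      Ideal.span {p | ∃ i j : Fin (n + m), i ≤ j ∧ (i : ℕ) + 1 + ((j : ℕ) + 1) ≤ n + m ∧
        (i : ℕ) + 1 ≤ n ∧ p = monomial (Finsupp.single i 1 + Finsupp.single j 1) (1 : K)}
    let D : ℕ := Module.finrank K
      ↥(Submodule.restrictScalars K ((I ^ 2 : Ideal (MvPolynomial (Fin (n + m)) K)))
          ⊓ homogeneousSubmodule (Fin (n + m)) K 4)
    Set.ncard {a : Fin (n + m) →₀ ℕ |
        monomial a (1 : K) ∈ I ^ 2 ∧
        ∃ i j h k : Fin (n + m), i ≤ j ∧ j ≤ h ∧ h ≤ k ∧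
          (j : ℕ) + 1 ≤ n ∧ ((i : ℕ) + 1) + ((k : ℕ) + 1) ≤ n + m ∧
          ((j : ℕ) + 1) + ((h : ℕ) + 1) ≤ n + m ∧
          a = Finsupp.single i 1 + Finsupp.single j 1 + Finsupp.single h 1 +
            Finsupp.single k 1} = D ∧
      D = (n + 1).choose 2 * (m + 1).choose 2 := by
  intro I D
  have hI : I = Ideal.span ((fun a => monomial a 1) '' generatorExponents n (n + m)) := by
    refine congrArg Ideal.span (Set.ext fun p => ⟨?_, ?_⟩)
    · rintro ⟨i, j, hij, hij', hi, rfl⟩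
      exact ⟨_, ⟨i, j, hij, hij', hi, rfl⟩, rfl⟩
    · rintro ⟨_, ⟨i, j, hij, hij', hi, rfl⟩, rfl⟩
      exact ⟨i, j, hij, hij', hi, rfl⟩
  have hI2 : I ^ 2 = Ideal.span ((fun a => monomial a 1) '' admissibleExponents n (n + m)) := by
    rw [hI, sq, span_monomial_one_mul_span_monomial_one,
      generatorExponents_add_generatorExponents]
  have hD : D = (admissibleExponents n (n + m)).ncard := by
    simp only [D]
    rw [hI2, restrictScalars_span_inf_homogeneousSubmodule,
      finrank_span_monomial_one (admissibleExponents_finite n _)]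
    rintro _ ⟨a, ha, rfl⟩
    exact isHomogeneous_monomial_of_mem_admissibleExponents ha
  refine ⟨?_, by rw [hD, ncard_admissibleExponents, card_admissibleQuads n m hnm]⟩
  rw [hD]
  congr 1
  ext a
  exact and_iff_right_of_imp fun ha => hI2 ▸ Ideal.subset_span ⟨a, ha, rfl⟩

/-- Let `n ≤ m` be positive integers and `I ⊆ S = K[x_1,…,x_{n+m}]` the monomial ideal
generated by `{x_i x_j : 1 ≤ i ≤ j ≤ n+m, i+j ≤ n+m, i ≤ n}` (variables are indexed by
`Fin (n+m)`, with `x_i` corresponding to the index `i-1`).  Then the number of degree-4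
monomials of `I²` of the form `x_i x_j x_h x_k` with `1 ≤ i ≤ j ≤ h ≤ k ≤ n+m`, `j ≤ n`,
`i+k ≤ n+m`, `j+h ≤ n+m` equals `dim_K (I²)_4`, and this dimension equals
`C(n+1,2)·C(m+1,2)`. -/
theorem monomial_count_eq_finrank_I_sq (K : Type*) [Field K] (n m : ℕ)
    (hn : 0 < n) (hnm : n ≤ m) :
    let I : Ideal (MvPolynomial (Fin (n + m)) K) :=
      Ideal.span {p | ∃ i j : Fin (n + m), i ≤ j ∧ (i : ℕ) + 1 + ((j : ℕ) + 1) ≤ n + m ∧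
        (i : ℕ) + 1 ≤ n ∧ p = monomial (Finsupp.single i 1 + Finsupp.single j 1) (1 : K)}
    let D : ℕ := Module.finrank K
      ↥(Submodule.restrictScalars K ((I ^ 2 : Ideal (MvPolynomial (Fin (n + m)) K)))
          ⊓ homogeneousSubmodule (Fin (n + m)) K 4)
    Set.ncard {a : Fin (n + m) →₀ ℕ |
        monomial a (1 : K) ∈ I ^ 2 ∧
        ∃ i j h k : Fin (n + m), i ≤ j ∧ j ≤ h ∧ h ≤ k ∧
          (j : ℕ) + 1 ≤ n ∧ ((i : ℕ) + 1) + ((k : ℕ) + 1) ≤ n + m ∧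
          ((j : ℕ) + 1) + ((h : ℕ) + 1) ≤ n + m ∧
          a = Finsupp.single i 1 + Finsupp.single j 1 + Finsupp.single h 1 +
            Finsupp.single k 1} = D ∧
      D = (n + 1).choose 2 * (m + 1).choose 2 :=
  monomial_count_eq_finrank_I_sq_general K n m hnm
end

section
/- For positive integers n ≤ m, the sum over i = 1 to n of binomial(n+m−2i+3, 3), minus binomial(m+2,4), minus binomial(n+2,4), plus binomial(m−n+2,4), equals binomial(n+1,2)·binomial(m+1,2). -/
/-!
Write `m = n + d` and reverse the order of summation: the sum becomes
`∑_{j<n} C(2j+d+3, 3)`. Induct on `n`; Pascal's rule turns the increments of the two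
`C(·, 4)` terms into `C(·, 3)` terms, and what remains of each step is a polynomial
identity in `n` and `d`, checked through the closed forms of `C(a, 2)` and `C(a, 3)`.
-/

open Finset Polynomial Nat

theorem Nat.cast_choose_three (K : Type*) [Field K] [CharZero K] (a : ℕ) :
    (a.choose 3 : K) = a * (a - 1) * (a - 2) / 6 := by
  have h := descPochhammer_eval_eq_descFactorial K a 3
  rw [descFactorial_eq_factorial_mul_choose] at h
  simp [descPochhammer_succ_right, factorial] at h
  rw [eq_div_iff (by norm_num)]
  linear_combination -h

theorem choose_three_sub_eq_choose_two_mul_sub (n d : ℕ) :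
    ((2 * n + d + 3).choose 3 : ℤ) - (n + d + 2).choose 3 - (n + 2).choose 3 =
      (n + 2).choose 2 * (n + d + 2).choose 2 - (n + 1).choose 2 * (n + d + 1).choose 2 := by
  qify
  simp only [cast_choose_two, cast_choose_three]
  push_cast
  ring

theorem sum_range_choose_three_sub_choose_four (d n : ℕ) :
    (∑ j ∈ range n, ((2 * j + d + 3).choose 3 : ℤ))
      - (n + d + 2).choose 4 - (n + 2).choose 4 + (d + 2).choose 4 =
      (n + 1).choose 2 * (n + d + 1).choose 2 := by
  induction n with
  | zero => simp [choose_eq_zero_of_lt]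
  | succ n ih =>
    have pascal (a : ℕ) : ((a + 1).choose 4 : ℤ) = a.choose 3 + a.choose 4 := by
      exact_mod_cast choose_succ_succ' a 3
    rw [sum_range_succ, show n + 1 + d + 2 = n + d + 2 + 1 by ring, pascal, pascal (n + 2),
      show n + 1 + d + 1 = n + d + 2 by ring]
    linear_combination ih + choose_three_sub_eq_choose_two_mul_sub n d

theorem sum_Icc_choose_three_eq_sum_range {n m : ℕ} (hnm : n ≤ m) :
    ∑ i ∈ Icc 1 n, (n + m - 2 * i + 3).choose 3 =
      ∑ j ∈ range n, (2 * j + (m - n) + 3).choose 3 := by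
  refine sum_nbij' (n - ·) (n - ·) ?_ ?_ ?_ ?_ ?_ <;> intro i hi <;>
    simp only [mem_Icc, mem_range] at hi ⊢ <;> try omega
  congr 2
  omega

theorem quadruple_count_identity_general (n m : ℕ) (hnm : n ≤ m) :
    (∑ i ∈ Finset.Icc 1 n, ((n + m - 2 * i + 3).choose 3 : ℤ))
      - ((m + 2).choose 4 : ℤ) - ((n + 2).choose 4 : ℤ) + ((m - n + 2).choose 4 : ℤ) =
      ((n + 1).choose 2 : ℤ) * ((m + 1).choose 2 : ℤ) := by
  obtain ⟨d, rfl⟩ := Nat.exists_eq_add_of_le hnm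
  have h := sum_range_choose_three_sub_choose_four d n
  rw_mod_cast [sum_Icc_choose_three_eq_sum_range hnm, Nat.add_sub_cancel_left]
  push_cast at h ⊢
  linear_combination h

/-- For positive integers `n ≤ m`,
`∑_{i=1}^n C(n+m−2i+3,3) − C(m+2,4) − C(n+2,4) + C(m−n+2,4) = C(n+1,2)·C(m+1,2)`. -/
theorem quadruple_count_identity (n m : ℕ) (hn : 0 < n) (hnm : n ≤ m) :
    (∑ i ∈ Finset.Icc 1 n, ((n + m - 2 * i + 3).choose 3 : ℤ))
      - ((m + 2).choose 4 : ℤ) - ((n + 2).choose 4 : ℤ) + ((m - n + 2).choose 4 : ℤ) =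
      ((n + 1).choose 2 : ℤ) * ((m + 1).choose 2 : ℤ) :=
  quadruple_count_identity_general n m hnm
end
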